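/- arXiv:2203.15142 — 6 statements merged into one kernel-verified Lean document; each statement's English description precedes it below -/
import Mathlib

section
/- For each a ∈ [0,1), the cubic polynomial ψ(s) = s³ − (2−a)s² + (2a−1)s − a has exactly one real root s₀ in the interval (1, 1+√2]. -/
lemma cubic_no_two_roots (a s t : ℝ) (hs1 : 1 < s) (hst : s < t)
    (h1 : s ^ 3 - (2 - a) * s ^ 2 + (2 * a - 1) * s - a = 0)
    (h2 : t ^ 3 - (2 - a) * t ^ 2 + (2 * a - 1) * t - a = 0) : False := by
  have ht1 : 1 < t := lt_trans hs1 hst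
  have keys : a * (s^2 + 2*s - 1) = 2*s^2 + s - s^3 := by linear_combination h1
  have keyt : a * (t^2 + 2*t - 1) = 2*t^2 + t - t^3 := by linear_combination h2
  have hg : (2*s^2 + s - s^3) * (t^2 + 2*t - 1) = (2*t^2 + t - t^3) * (s^2 + 2*s - 1) := by
    linear_combination (s^2 + 2*s - 1) * keyt - (t^2 + 2*t - 1) * keys
  have hfac : (t - s) * ((s*t - 1)^2 + (s + t) * (2*s*t + 2 - (s + t))) = 0 := by
    linear_combination hg
  have hst' : 1 < s * t := by nlinarith
  have hpos : 0 < (s*t - 1)^2 + (s + t) * (2*s*t + 2 - (s + t)) := by nlinarith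
  nlinarith [mul_pos (sub_pos.2 hst) hpos]

/-- For each `a ∈ [0,1)`, the cubic `ψ(s) = s³ − (2−a)s² + (2a−1)s − a` has
exactly one real root in the interval `(1, 1+√2]`. -/
theorem cubic_unique_root (a : ℝ) (ha0 : 0 ≤ a) (ha1 : a < 1) :
    ∃! s : ℝ, s ∈ Set.Ioc 1 (1 + Real.sqrt 2) ∧
      s ^ 3 - (2 - a) * s ^ 2 + (2 * a - 1) * s - a = 0 := by
  set r := Real.sqrt 2 with hr
  have hr2 : r ^ 2 = 2 := Real.sq_sqrt (by norm_num)
  have hr1 : 1 ≤ r := by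
    nlinarith [Real.sqrt_nonneg 2]
  set f : ℝ → ℝ := fun s => s ^ 3 - (2 - a) * s ^ 2 + (2 * a - 1) * s - a with hf
  have hcont : ContinuousOn f (Set.Icc 1 (1 + r)) := by
    apply Continuous.continuousOn; continuity
  have hle : (1:ℝ) ≤ 1 + r := by linarith
  have hf1 : f 1 = 2 * a - 2 := by simp [hf]; ring
  have hfr : f (1 + r) = 4 * a * (1 + r) := by
    simp only [hf]; nlinarith [hr2]
  have h0 : (0:ℝ) ∈ Set.Ioc (f 1) (f (1 + r)) := by
    constructor
    · rw [hf1]; linarith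
    · rw [hfr]; nlinarith
  obtain ⟨s, hs, hfs⟩ := intermediate_value_Ioc hle hcont h0
  refine ⟨s, ⟨hs, hfs⟩, ?_⟩
  rintro t ⟨⟨ht1, ht2⟩, hft⟩
  rcases lt_trichotomy t s with h | h | h
  · exact absurd (cubic_no_two_roots a t s ht1 h hft hfs) id
  · exact h
  · exact absurd (cubic_no_two_roots a s t hs.1 h hfs hft) id
end

section
/- For 0 ≤ a < 1, any real root s of ψ(s) = s³ − (2−a)s² + (2a−1)s − a satisfying s > 1 must satisfy s ≤ 1+√2; moreover ψ has exactly one real root greater than 1 (the other two roots are either non-real or one is negative). -/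
/-- For `0 ≤ a < 1`, every real root of `ψ(s) = s³ − (2−a)s² + (2a−1)s − a`
greater than 1 is at most `1 + √2`, and `ψ` has exactly one real root
greater than 1. -/
theorem cubic_root_location (a : ℝ) (ha0 : 0 ≤ a) (ha1 : a < 1) :
    (∀ s : ℝ, 1 < s → s ^ 3 - (2 - a) * s ^ 2 + (2 * a - 1) * s - a = 0 →
      s ≤ 1 + Real.sqrt 2) ∧
    (∃! s : ℝ, 1 < s ∧ s ^ 3 - (2 - a) * s ^ 2 + (2 * a - 1) * s - a = 0) := by
  constructor
  · intro s hs hroot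
    -- from the root equation, s(s²-2s-1) = -a(s²+2s-1) ≤ 0
    have hkey : s * (s ^ 2 - 2 * s - 1) = -a * (s ^ 2 + 2 * s - 1) := by
      linear_combination hroot
    have hden : (0:ℝ) < s ^ 2 + 2 * s - 1 := by nlinarith
    have h1 : s * (s ^ 2 - 2 * s - 1) ≤ 0 := by
      rw [hkey]
      have : 0 ≤ a * (s ^ 2 + 2 * s - 1) := by positivity
      linarith
    have h2 : s ^ 2 - 2 * s - 1 ≤ 0 := by
      by_contra h
      push_neg at h
      nlinarith
    have hsq : Real.sqrt 2 ^ 2 = 2 := Real.sq_sqrt (by norm_num)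
    nlinarith [Real.sqrt_nonneg 2, sq_nonneg (s - 1 - Real.sqrt 2)]
  · -- existence via IVT on [1,3]
    set f : ℝ → ℝ := fun s => s ^ 3 - (2 - a) * s ^ 2 + (2 * a - 1) * s - a with hf
    have hcont : ContinuousOn f (Set.Icc (1:ℝ) 3) := by
      apply Continuous.continuousOn; fun_prop
    have hf1 : f 1 = 2 * a - 2 := by simp [hf]; ring
    have hf3 : f 3 = 14 * a + 6 := by simp [hf]; ring
    have h0 : (0:ℝ) ∈ Set.Icc (f 1) (f 3) := by
      rw [Set.mem_Icc, hf1, hf3]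
      constructor <;> linarith
    have := intermediate_value_Icc (by norm_num : (1:ℝ) ≤ 3) hcont h0
    obtain ⟨s, hsmem, hs0⟩ := this
    have hs1 : 1 < s := by
      rcases lt_or_eq_of_le hsmem.1 with h | h
      · exact h
      · exfalso; rw [← h] at hs0; rw [hf1] at hs0; linarith
    refine ⟨s, ⟨hs1, hs0⟩, ?_⟩
    rintro t ⟨ht1, htroot⟩
    by_contra hne
    -- two distinct roots > 1 lead to a contradiction via Vieta
    have hfactor : (t - s) * (t ^ 2 + t * s + s ^ 2 - (2 - a) * (t + s) + (2 * a - 1)) = 0 := by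
      linear_combination htroot - hs0
    have hQ : t ^ 2 + t * s + s ^ 2 - (2 - a) * (t + s) + (2 * a - 1) = 0 := by
      rcases mul_eq_zero.mp hfactor with h | h
      · exact absurd (by linarith : t = s) hne
      · exact h
    have hprod : t * s * (2 - a - t - s) = a := by
      linear_combination htroot - t * hQ
    have hts : 1 < t * s := by nlinarith
    have hneg : 2 - a - t - s < 0 := by linarith
    nlinarith [mul_neg_of_pos_of_neg (by linarith : (0:ℝ) < t * s) hneg]
end

section
/- Let B be a finite Blaschke product with zeros z_j ∈ 𝔻, and let ζ ∈ ∂𝔻 be a point with dist(ζ, {z_j}) > 0 and |B'(ζ)|·dist(ζ, {z_j}) ≥ δ for some 0 < δ ≤ 1. Then for z₀ = (1 − δ/(8|B'(ζ)|))ζ one has |B'(z₀)|(1 − |z₀|²) ≥ 0.07·δ. -/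
open Complex Finset

lemma aux_normSq_den_sub (a w : ℂ) :
    Complex.normSq (1 - (starRingEnd ℂ) a * w) - Complex.normSq (w - a)
      = (1 - Complex.normSq w) * (1 - Complex.normSq a) := by
  simp only [normSq_apply, mul_re, mul_im, sub_re, sub_im, one_re, one_im, conj_re, conj_im]
  ring

lemma aux_weierstrass {ι : Type*} : ∀ (s : Finset ι) (t : ι → ℝ),
    (∀ j ∈ s, 0 ≤ t j) → (∀ j ∈ s, t j ≤ 1) →
    1 - ∑ j ∈ s, t j ≤ ∏ j ∈ s, (1 - t j) := by
  intro s
  induction s using Finset.cons_induction with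
  | empty => simp
  | cons a s ha ih =>
    intro t h0 h1
    rw [Finset.prod_cons, Finset.sum_cons]
    have hs0 : 0 ≤ ∑ j ∈ s, t j := Finset.sum_nonneg fun j hj => h0 j (Finset.mem_cons_of_mem hj)
    have := ih t (fun j hj => h0 j (Finset.mem_cons_of_mem hj))
      (fun j hj => h1 j (Finset.mem_cons_of_mem hj))
    have ha0 : 0 ≤ t a := h0 a (Finset.mem_cons_self a s)
    have ha1 : t a ≤ 1 := h1 a (Finset.mem_cons_self a s)
    nlinarith

lemma aux_normSq_lt_one (b : ℂ) (h : ‖b‖ < 1) : Complex.normSq b < 1 := by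
  rw [← Complex.sq_norm]
  nlinarith [norm_nonneg b]

lemma aux_S_pos (S d δ : ℝ) (h1 : 0 < δ) (h2 : 0 < d) (h3 : δ ≤ S * d) : 0 < S := by
  nlinarith

lemma aux_low_sq (x mj : ℝ) (h : 7/8 * mj ≤ x) (hm : 0 < mj) : 49/64 * mj ^ 2 ≤ x ^ 2 := by
  nlinarith

lemma aux_rz (e : ℝ) (h0 : 0 < e) (h14 : e < 1/4) :
    0 < 1 - (1 - e) ^ 2 ∧ 1 - (1 - e) ^ 2 ≤ 2 * e := by
  constructor <;> nlinarith

lemma aux_le_one (x : ℝ) (h0 : 0 ≤ x) (h2 : x ^ 2 ≤ 1) : x ≤ 1 := by nlinarith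

lemma aux_ge_of_sq (x c : ℝ) (h0 : 0 ≤ x) (h1 : x ≤ 1) (h2 : c ≤ x ^ 2) : c ≤ x := by
  nlinarith [mul_nonneg h0 (sub_nonneg.2 h1)]

lemma aux_sq64 (e mj : ℝ) (h : 8 * e ≤ mj) (h0 : 0 < e) : 64 * e ^ 2 ≤ mj ^ 2 := by nlinarith

lemma aux_prod_sq_le (x y mj : ℝ) (hx0 : 0 ≤ x) (hy0 : 0 ≤ y) (hx : x ≤ 9/8 * mj)
    (hy : y ≤ 9/8 * mj) (hm : 0 ≤ mj) : x ^ 2 * y ^ 2 ≤ 6561/4096 * mj ^ 4 := by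
  have h1 : x ^ 2 * y ^ 2 ≤ (9/8 * mj) ^ 2 * (9/8 * mj) ^ 2 := by
    apply mul_le_mul (pow_le_pow_left₀ hx0 hx 2) (pow_le_pow_left₀ hy0 hy 2) (sq_nonneg y)
      (sq_nonneg _)
  nlinarith [h1]

lemma aux_hY (e : ℝ) (h0 : 0 < e) (h14 : e < 1/4) : 7/4 * e ≤ 1 - (1 - e) ^ 2 := by nlinarith

lemma aux_vre_low (e mj sa : ℝ) (he0 : 0 < e) (hem : 8 * e ≤ mj) (hs0 : 0 ≤ sa)
    (hs1 : sa ≤ 1) (he14 : e < 1/4) :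
    49/64 * mj ^ 2 ≤ (1 - e) * (1 + sa) - (1 + (1 - e) ^ 2) * ((1 + sa - mj ^ 2) / 2) := by
  have h1 : 64 * e ^ 2 ≤ mj ^ 2 := by nlinarith
  have h2 : 0 ≤ (1/4 - e) * (7/4 - e) := by nlinarith
  nlinarith [h1, mul_nonneg h2 (sq_nonneg mj), mul_nonneg (sub_nonneg.2 hs1) (sq_nonneg e)]

lemma aux_hasDerivAt_blaschke (a w : ℂ) (h : 1 - (starRingEnd ℂ) a * w ≠ 0) :
    HasDerivAt (fun z => (z - a) / (1 - (starRingEnd ℂ) a * z))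
      ((1 - (starRingEnd ℂ) a * a) / (1 - (starRingEnd ℂ) a * w) ^ 2) w := by
  have h1 : HasDerivAt (fun z : ℂ => z - a) 1 w := (hasDerivAt_id w).sub_const a
  have h2 : HasDerivAt (fun z : ℂ => 1 - (starRingEnd ℂ) a * z) (-((starRingEnd ℂ) a)) w := by
    simpa using ((hasDerivAt_id w).const_mul ((starRingEnd ℂ) a)).const_sub 1
  have := h1.fun_div h2 h
  exact this.congr_deriv (by ring)

lemma aux_deriv_blaschke_prod (n : ℕ) (z : Fin n → ℂ) (c : ℂ) (B : ℂ → ℂ)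
    (hB : ∀ w : ℂ, B w = c * ∏ j, (w - z j) / (1 - (starRingEnd ℂ) (z j) * w))
    (w : ℂ) (hden : ∀ j, 1 - (starRingEnd ℂ) (z j) * w ≠ 0)
    (hnum : ∀ j, w - z j ≠ 0) :
    deriv B w = B w * ∑ j, (1 - (starRingEnd ℂ) (z j) * z j) /
      ((w - z j) * (1 - (starRingEnd ℂ) (z j) * w)) := by
  set g : Fin n → ℂ → ℂ := fun j z' => (z' - z j) / (1 - (starRingEnd ℂ) (z j) * z') with hg
  have hprod : HasDerivAt (fun w' => ∏ j, g j w')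
      (∑ j, (∏ k ∈ Finset.univ.erase j, g k w) •
        ((1 - (starRingEnd ℂ) (z j) * z j) / (1 - (starRingEnd ℂ) (z j) * w) ^ 2)) w :=
    HasDerivAt.fun_finsetProd (fun j _ => aux_hasDerivAt_blaschke (z j) w (hden j))
  have hBd : HasDerivAt B
      (c * ∑ j, (∏ k ∈ Finset.univ.erase j, g k w) •
        ((1 - (starRingEnd ℂ) (z j) * z j) / (1 - (starRingEnd ℂ) (z j) * w) ^ 2)) w := by
    have : B = fun w' => c * ∏ j, g j w' := funext hB
    rw [this]
    exact hprod.const_mul c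
  rw [hBd.deriv, hB w, mul_assoc]
  congr 1
  rw [Finset.mul_sum]
  refine Finset.sum_congr rfl fun j _ => ?_
  have herase : (∏ k, g k w) = (∏ k ∈ Finset.univ.erase j, g k w) * g j w := by
    rw [Finset.prod_erase_mul _ _ (Finset.mem_univ j)]
  rw [herase, smul_eq_mul]
  have hgj : g j w = (w - z j) / (1 - (starRingEnd ℂ) (z j) * w) := rfl
  rw [hgj, mul_assoc]
  congr 1
  have h1 := hden j
  have h2 := hnum j
  field_simp

set_option maxHeartbeats 4000000 in
/-- Theorem 4 of the paper (finite Blaschke products): if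
`|B'(ζ)| · dist(ζ, {z_j}) ≥ δ` for a boundary point `ζ`, then at
`z₀ = (1 − δ/(8|B'(ζ)|))ζ` one has `|B'(z₀)|(1 − |z₀|²) ≥ 0.07 δ`. -/
theorem blaschke_lower_bound (n : ℕ) (z : Fin n → ℂ)
    (hz : ∀ j, ‖z j‖ < 1)
    (c : ℂ) (hc : ‖c‖ = 1)
    (B : ℂ → ℂ)
    (hB : ∀ w : ℂ, B w = c * ∏ j, (w - z j) / (1 - (starRingEnd ℂ) (z j) * w))
    (ζ : ℂ) (hζ : ‖ζ‖ = 1)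
    (δ : ℝ) (hδ0 : 0 < δ) (hδ1 : δ ≤ 1)
    (d : ℝ) (hd : 0 < d) (hdist : ∀ j, d ≤ ‖ζ - z j‖)
    (hcond : δ ≤ ‖deriv B ζ‖ * d)
    (z₀ : ℂ)
    (hz₀ : z₀ = ((1 - δ / (8 * ‖deriv B ζ‖) : ℝ) : ℂ) * ζ) :
    0.07 * δ ≤ ‖deriv B z₀‖ * (1 - ‖z₀‖ ^ 2) := by
  have hζ2 : ζ * (starRingEnd ℂ) ζ = 1 := by
    rw [Complex.mul_conj]
    norm_cast
    rw [Complex.normSq_eq_norm_sq, hζ]; norm_num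
  have hζne : ζ ≠ 0 := by
    intro h; rw [h, norm_zero] at hζ; linarith
  -- basic distances
  set m : Fin n → ℝ := fun j => ‖ζ - z j‖ with hm
  have hm0 : ∀ j, 0 < m j := fun j => lt_of_lt_of_le hd (hdist j)
  have hmz : ∀ j, ζ - z j ≠ 0 := by
    intro j h
    have := hm0 j
    rw [hm] at this; simp only [h, norm_zero] at this; linarith
  have hden1 : ∀ j, 1 - (starRingEnd ℂ) (z j) * ζ = ζ * (starRingEnd ℂ) (ζ - z j) := by
    intro j
    rw [map_sub]
    linear_combination -hζ2
  have habs1 : ∀ j, ‖1 - (starRingEnd ℂ) (z j) * ζ‖ = m j := by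
    intro j
    rw [hden1 j, norm_mul, hζ, one_mul, Complex.norm_conj]
  have hdenζ : ∀ j, 1 - (starRingEnd ℂ) (z j) * ζ ≠ 0 := by
    intro j h
    have := habs1 j
    rw [h, norm_zero] at this
    exact absurd this.symm (ne_of_gt (hm0 j))
  -- the sum S
  set s : Fin n → ℝ := fun j => (1 - Complex.normSq (z j)) / m j ^ 2 with hs
  set S : ℝ := ∑ j, s j with hS
  have hs0 : ∀ j, 0 < s j := by
    intro j
    apply div_pos
    · have h1 := aux_normSq_lt_one (z j) (hz j)
      linarith
    · have := hm0 j
      positivity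
  have hSnn : 0 ≤ S := Finset.sum_nonneg fun j _ => (hs0 j).le
  have haux1 : ∀ b : ℂ, 1 - (starRingEnd ℂ) b * b = ((1 - Complex.normSq b : ℝ) : ℂ) := by
    intro b
    push_cast
    rw [← Complex.mul_conj b]
    ring
  -- Step A : |B'(ζ)| = S
  have hA : ‖deriv B ζ‖ = S := by
    have hdζ := aux_deriv_blaschke_prod n z c B hB ζ hdenζ hmz
    have hconjinv : (starRingEnd ℂ) ζ = ζ⁻¹ :=
      eq_inv_of_mul_eq_one_left (by rw [mul_comm]; exact hζ2)
    have hterm : ∀ j : Fin n, (1 - (starRingEnd ℂ) (z j) * z j) /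
        ((ζ - z j) * (1 - (starRingEnd ℂ) (z j) * ζ)) = (starRingEnd ℂ) ζ * ((s j : ℝ) : ℂ) := by
      intro j
      have e2 : (ζ - z j) * (1 - (starRingEnd ℂ) (z j) * ζ)
          = ((Complex.normSq (ζ - z j) : ℝ) : ℂ) * ζ := by
        rw [hden1 j, ← Complex.mul_conj (ζ - z j)]
        ring
      have hmsq : m j ^ 2 = Complex.normSq (ζ - z j) := Complex.sq_norm _
      have hsj : ((s j : ℝ) : ℂ) = ((1 - Complex.normSq (z j) : ℝ) : ℂ) /
          ((Complex.normSq (ζ - z j) : ℝ) : ℂ) := by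
        have : s j = (1 - Complex.normSq (z j)) / Complex.normSq (ζ - z j) := by
          rw [hs]; rw [← hmsq]
        rw [this]
        push_cast
        ring
      rw [haux1 (z j), e2, hsj, hconjinv]
      have hq : ((Complex.normSq (ζ - z j) : ℝ) : ℂ) ≠ 0 := by
        rw [Ne, Complex.ofReal_eq_zero]
        exact (Complex.normSq_pos.2 (hmz j)).ne'
      rw [div_mul_eq_div_div, div_eq_mul_inv _ ζ, mul_comm]
    have hsum' : (∑ j, (1 - (starRingEnd ℂ) (z j) * z j) /
        ((ζ - z j) * (1 - (starRingEnd ℂ) (z j) * ζ))) = (starRingEnd ℂ) ζ * ((S : ℝ) : ℂ) := by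
      rw [Finset.sum_congr rfl (fun j _ => hterm j), ← Finset.mul_sum, hS]
      push_cast
      ring
    have hBζ : ‖B ζ‖ = 1 := by
      rw [hB ζ, norm_mul, hc, one_mul, norm_prod]
      apply Finset.prod_eq_one
      intro j _
      rw [norm_div, habs1 j]
      exact div_self (ne_of_gt (hm0 j))
    rw [hdζ, hsum', norm_mul, norm_mul, hBζ, Complex.norm_conj, hζ, one_mul, one_mul,
      Complex.norm_real, Real.norm_eq_abs, _root_.abs_of_nonneg hSnn]
  -- positivity consequences
  have hS0 : 0 < S := by
    rw [hA] at hcond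
    exact aux_S_pos S d δ hδ0 hd hcond
  -- setup ε, r
  set ε : ℝ := δ / (8 * S) with hε
  have hε0 : 0 < ε := by positivity
  have hεd : ε ≤ d / 8 := by
    rw [hA] at hcond
    rw [hε, div_le_div_iff₀ (by positivity) (by norm_num)]
    linarith [hcond]
  have hn : ∃ j : Fin n, True := by
    by_contra h
    push_neg at h
    have : S = 0 := by
      rw [hS]
      apply Finset.sum_eq_zero
      intro j _
      exact (h j).elim
    linarith
  obtain ⟨j₀, -⟩ := hn
  have hd2 : d < 2 := by
    have h1 := hdist j₀
    have h2 : ‖ζ - z j₀‖ ≤ ‖ζ‖ + ‖z j₀‖ := by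
      simpa [sub_eq_add_neg] using norm_add_le ζ (-(z j₀))
    have := hz j₀
    rw [hζ] at h2
    linarith
  have hε14 : ε < 1/4 := by linarith
  set r : ℝ := 1 - ε with hr
  have hr34 : 3/4 < r := by rw [hr]; linarith
  have hr1 : r < 1 := by rw [hr]; linarith
  have hz₀' : z₀ = (r : ℂ) * ζ := by rw [hz₀, hA]
  have habsz₀ : ‖z₀‖ = r := by
    rw [hz₀', norm_mul, hζ, mul_one, Complex.norm_real, Real.norm_eq_abs, abs_of_pos (by linarith)]
  -- distances at z₀
  have hz₀ζ : ‖z₀ - ζ‖ = ε := by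
    have : z₀ - ζ = ((r - 1 : ℝ) : ℂ) * ζ := by rw [hz₀']; push_cast; ring
    rw [this, norm_mul, hζ, mul_one, Complex.norm_real, Real.norm_eq_abs, hr]
    rw [abs_of_nonpos (by linarith)]; ring
  have hεm : ∀ j, 8 * ε ≤ m j := by
    intro j
    have := hdist j
    linarith
  have low1 : ∀ j, 7/8 * m j ≤ ‖z₀ - z j‖ := by
    intro j
    have h1 : m j ≤ ‖z₀ - z j‖ + ‖z₀ - ζ‖ := by
      have := norm_sub_le_norm_sub_add_norm_sub ζ z₀ (z j)
      have e : ‖ζ - z₀‖ = ‖z₀ - ζ‖ := norm_sub_rev ζ z₀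
      rw [hm]
      calc ‖ζ - z j‖ ≤ ‖ζ - z₀‖ + ‖z₀ - z j‖ := this
        _ = ‖z₀ - z j‖ + ‖z₀ - ζ‖ := by rw [e]; ring
    rw [hz₀ζ] at h1
    have := hεm j
    linarith
  have up1 : ∀ j, ‖z₀ - z j‖ ≤ 9/8 * m j := by
    intro j
    have h1 : ‖z₀ - z j‖ ≤ ‖z₀ - ζ‖ + ‖ζ - z j‖ := by
      have := norm_sub_le_norm_sub_add_norm_sub z₀ ζ (z j)
      exact this
    rw [hz₀ζ] at h1
    have := hεm j
    have hmj : m j = ‖ζ - z j‖ := rfl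
    linarith
  have hd0diff : ∀ j, ‖(1 - (starRingEnd ℂ) (z j) * z₀) - (1 - (starRingEnd ℂ) (z j) * ζ)‖ ≤ ε := by
    intro j
    have : (1 - (starRingEnd ℂ) (z j) * z₀) - (1 - (starRingEnd ℂ) (z j) * ζ)
        = (starRingEnd ℂ) (z j) * (ζ - z₀) := by ring
    rw [this, norm_mul, Complex.norm_conj]
    have e : ‖ζ - z₀‖ = ε := by rw [norm_sub_rev]; exact hz₀ζ
    rw [e]
    have h1 := norm_nonneg (z j)
    have h2 := (hz j).le
    calc ‖z j‖ * ε ≤ 1 * ε := by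
          apply mul_le_mul_of_nonneg_right h2 hε0.le
      _ = ε := one_mul ε
  have low2 : ∀ j, 7/8 * m j ≤ ‖1 - (starRingEnd ℂ) (z j) * z₀‖ := by
    intro j
    have h1 := hd0diff j
    have h2 := habs1 j
    have h3 : ‖1 - (starRingEnd ℂ) (z j) * ζ‖ ≤
        ‖1 - (starRingEnd ℂ) (z j) * z₀‖ +
        ‖(1 - (starRingEnd ℂ) (z j) * z₀) - (1 - (starRingEnd ℂ) (z j) * ζ)‖ := by
      have := norm_sub_le_norm_sub_add_norm_sub (1 - (starRingEnd ℂ) (z j) * ζ) (1 - (starRingEnd ℂ) (z j) * z₀) 0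
      simp only [sub_zero] at this
      rw [norm_sub_rev ((1 - (starRingEnd ℂ) (z j) * ζ)) ((1 - (starRingEnd ℂ) (z j) * z₀))] at this
      linarith
    rw [h2] at h3
    have := hεm j
    linarith
  have up2 : ∀ j, ‖1 - (starRingEnd ℂ) (z j) * z₀‖ ≤ 9/8 * m j := by
    intro j
    have h1 := hd0diff j
    have h2 := habs1 j
    have h3 : ‖1 - (starRingEnd ℂ) (z j) * z₀‖ ≤
        ‖1 - (starRingEnd ℂ) (z j) * ζ‖ +
        ‖(1 - (starRingEnd ℂ) (z j) * z₀) - (1 - (starRingEnd ℂ) (z j) * ζ)‖ := by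
      have := norm_sub_le_norm_sub_add_norm_sub (1 - (starRingEnd ℂ) (z j) * z₀) (1 - (starRingEnd ℂ) (z j) * ζ) 0
      simp only [sub_zero] at this
      linarith
    rw [h2] at h3
    have := hεm j
    linarith
  have hnum0 : ∀ j, z₀ - z j ≠ 0 := by
    intro j h
    have := low1 j
    rw [h, norm_zero] at this
    linarith [hm0 j]
  have hden0 : ∀ j, 1 - (starRingEnd ℂ) (z j) * z₀ ≠ 0 := by
    intro j h
    have := low2 j
    rw [h, norm_zero] at this
    linarith [hm0 j]
  have hSε : S * ε = δ / 8 := by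
    rw [hε]
    field_simp
  -- Step B : lower bound for |B z₀|
  have hnsqz₀ : Complex.normSq z₀ = r ^ 2 := by
    rw [← Complex.sq_norm, habsz₀]
  have hp : ∀ j : Fin n, ‖(z₀ - z j) / (1 - (starRingEnd ℂ) (z j) * z₀)‖ ^ 2
      = 1 - (1 - Complex.normSq z₀) * (1 - Complex.normSq (z j)) /
        Complex.normSq (1 - (starRingEnd ℂ) (z j) * z₀) := by
    intro j
    have hd0 : Complex.normSq (1 - (starRingEnd ℂ) (z j) * z₀) ≠ 0 :=
      (Complex.normSq_pos.2 (hden0 j)).ne'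
    rw [norm_div, div_pow, Complex.sq_norm, Complex.sq_norm]
    rw [eq_sub_iff_add_eq, ← add_div, div_eq_one_iff_eq hd0]
    linear_combination -aux_normSq_den_sub (z j) z₀
  set t : Fin n → ℝ := fun j => (1 - Complex.normSq z₀) * (1 - Complex.normSq (z j)) /
      Complex.normSq (1 - (starRingEnd ℂ) (z j) * z₀) with ht
  have hnsq_low : ∀ j, 49/64 * m j ^ 2 ≤ Complex.normSq (1 - (starRingEnd ℂ) (z j) * z₀) := by
    intro j
    rw [← Complex.sq_norm]
    exact aux_low_sq _ _ (low2 j) (hm0 j)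
  have hnsq_pos : ∀ j, 0 < Complex.normSq (1 - (starRingEnd ℂ) (z j) * z₀) := by
    intro j
    exact Complex.normSq_pos.2 (hden0 j)
  have hna : ∀ j, 0 ≤ Complex.normSq (z j) ∧ Complex.normSq (z j) ≤ 1 := by
    intro j
    constructor
    · exact Complex.normSq_nonneg _
    · exact (aux_normSq_lt_one (z j) (hz j)).le
  have hrz : 0 < 1 - Complex.normSq z₀ ∧ 1 - Complex.normSq z₀ ≤ 2 * ε := by
    rw [hnsqz₀, hr]
    exact aux_rz ε hε0 hε14
  have ht0 : ∀ j, 0 ≤ t j := by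
    intro j
    apply div_nonneg
    · exact mul_nonneg hrz.1.le (by linarith [(hna j).2])
    · exact (hnsq_pos j).le
  have ht1 : ∀ j, t j ≤ 1 := by
    intro j
    have := hp j
    linarith [this, sq_nonneg (‖(z₀ - z j) / (1 - (starRingEnd ℂ) (z j) * z₀)‖)]
  have htb : ∀ j, t j ≤ 128/49 * ε * s j := by
    intro j
    have h1 : t j ≤ (2 * ε) * (1 - Complex.normSq (z j)) / (49/64 * m j ^ 2) := by
      apply div_le_div₀ (mul_nonneg (by linarith [hε0]) (by linarith [(hna j).2])) _
        (mul_pos (by norm_num) (pow_pos (hm0 j) 2)) (hnsq_low j)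
      exact mul_le_mul_of_nonneg_right hrz.2 (by linarith [(hna j).2])
    have h2 : (2 * ε) * (1 - Complex.normSq (z j)) / (49/64 * m j ^ 2) = 128/49 * ε * s j := by
      rw [hs]
      have := hm0 j
      field_simp
      ring
    linarith [h1, h2.symm.le]
  have habsB2 : ‖B z₀‖ ^ 2 = ∏ j, (1 - t j) := by
    rw [hB z₀, norm_mul, hc, one_mul, norm_prod, ← Finset.prod_pow]
    exact Finset.prod_congr rfl fun j _ => hp j
  have hsumt : ∑ j, t j ≤ 16/49 * δ := by
    calc ∑ j, t j ≤ ∑ j, 128/49 * ε * s j := Finset.sum_le_sum fun j _ => htb j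
      _ = 128/49 * ε * S := by rw [hS, Finset.mul_sum]
      _ = 16/49 * δ := by linear_combination (128/49 : ℝ) * hSε
  have hW := aux_weierstrass Finset.univ t (fun j _ => ht0 j) (fun j _ => ht1 j)
  have hB2 : 33/49 ≤ ‖B z₀‖ ^ 2 := by
    rw [habsB2]
    have : (1 : ℝ) - ∑ j, t j ≥ 33/49 := by linarith
    linarith
  have hprodle1 : ∏ j, (1 - t j) ≤ 1 :=
    Finset.prod_le_one (fun j _ => by linarith [ht1 j]) (fun j _ => by linarith [ht0 j])
  have hBz₀le : ‖B z₀‖ ≤ 1 := by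
    refine aux_le_one _ (norm_nonneg _) ?_
    rw [habsB2]
    exact hprodle1
  have hBz₀ : 33/49 ≤ ‖B z₀‖ :=
    aux_ge_of_sq _ _ (norm_nonneg _) hBz₀le hB2
  -- Step C: the sum at z₀
  have hre : ∀ j : Fin n, 3136/6561 * s j ≤ (ζ * ((1 - (starRingEnd ℂ) (z j) * z j) /
      ((z₀ - z j) * (1 - (starRingEnd ℂ) (z j) * z₀)))).re := by
    intro j
    set a : ℂ := z j with ha
    set v : ℂ := (z₀ - a) * (starRingEnd ℂ) (ζ - (r : ℂ) * a) with hv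
    have hconj : 1 - (starRingEnd ℂ) a * z₀ = ζ * (starRingEnd ℂ) (ζ - (r : ℂ) * a) := by
      rw [hz₀', map_sub, map_mul, Complex.conj_ofReal]
      linear_combination -hζ2
    have hkey : ζ * ((1 - (starRingEnd ℂ) a * a) / ((z₀ - a) * (1 - (starRingEnd ℂ) a * z₀)))
        = ((1 - Complex.normSq a : ℝ) : ℂ) / v := by
      rw [haux1 a, hconj]
      have e : (z₀ - a) * (ζ * (starRingEnd ℂ) (ζ - (r : ℂ) * a)) = ζ * v := by
        rw [hv]; ring
      rw [e, mul_div_assoc', mul_div_mul_left _ _ hζne]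
    have hrev : (((1 - Complex.normSq a : ℝ) : ℂ) / v).re
        = (1 - Complex.normSq a) * v.re / Complex.normSq v := by
      rw [Complex.div_re, Complex.ofReal_re, Complex.ofReal_im]
      ring
    have hvform : v = (r : ℂ) * (1 + (starRingEnd ℂ) a * a)
        - ((r : ℂ) ^ 2 * (starRingEnd ℂ) (a * (starRingEnd ℂ) ζ) + a * (starRingEnd ℂ) ζ) := by
      rw [hv, hz₀', map_sub, map_mul, Complex.conj_ofReal, map_mul, Complex.conj_conj]
      linear_combination (r : ℂ) * hζ2
    have hvre : v.re = r * (1 + Complex.normSq a) - (1 + r ^ 2) * (a * (starRingEnd ℂ) ζ).re := by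
      rw [hvform]
      have e1 : (starRingEnd ℂ) a * a = ((Complex.normSq a : ℝ) : ℂ) := by
        rw [mul_comm, Complex.mul_conj]
      rw [e1, show ((r : ℂ)) ^ 2 = ((r ^ 2 : ℝ) : ℂ) by push_cast; ring]
      simp only [Complex.sub_re, Complex.add_re, Complex.mul_re, Complex.ofReal_re,
        Complex.ofReal_im, Complex.one_re, Complex.one_im, Complex.conj_re, Complex.conj_im,
        Complex.add_im, Complex.mul_im]
      ring
    have hζn : ζ.re ^ 2 + ζ.im ^ 2 = 1 := by
      have h1 : Complex.normSq ζ = 1 := by rw [Complex.normSq_eq_norm_sq, hζ]; norm_num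
      rw [Complex.normSq_apply] at h1
      linear_combination h1
    have hm2 : Complex.normSq (ζ - a) = 1 + Complex.normSq a
        - 2 * (a * (starRingEnd ℂ) ζ).re := by
      simp only [Complex.normSq_apply, Complex.mul_re, Complex.sub_re, Complex.sub_im,
        Complex.conj_re, Complex.conj_im]
      linear_combination hζn
    have hmsq : m j ^ 2 = Complex.normSq (ζ - a) := Complex.sq_norm _
    have hε2 : 64 * ε ^ 2 ≤ m j ^ 2 := aux_sq64 ε (m j) (hεm j) hε0
    have hvre_low : 49/64 * m j ^ 2 ≤ v.re := by
      rw [hvre]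
      have h1 : (a * (starRingEnd ℂ) ζ).re = (1 + Complex.normSq a - m j ^ 2) / 2 := by
        rw [hmsq, hm2]; ring
      rw [h1]
      have hna0 : 0 ≤ Complex.normSq a := Complex.normSq_nonneg a
      have hna1 : Complex.normSq a ≤ 1 := (hna j).2
      have := aux_vre_low ε (m j) (Complex.normSq a) hε0 (hεm j) hna0 hna1 hε14
      rw [hr]
      linarith [this]
    have h1ζ : Complex.normSq ζ = 1 := by rw [Complex.normSq_eq_norm_sq, hζ]; norm_num
    have h7 : Complex.normSq ((starRingEnd ℂ) (ζ - (r : ℂ) * a))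
        = Complex.normSq (1 - (starRingEnd ℂ) a * z₀) := by
      rw [hconj, Complex.normSq_mul, h1ζ, one_mul]
    have hnsqve : Complex.normSq v = ‖z₀ - a‖ ^ 2
        * ‖1 - (starRingEnd ℂ) a * z₀‖ ^ 2 := by
      rw [hv, Complex.normSq_mul, h7, ← Complex.sq_norm, ← Complex.sq_norm]
    have hnsqv_pos : 0 < Complex.normSq v := by
      rw [hnsqve]
      exact mul_pos (pow_pos (lt_of_lt_of_le (by linarith [hm0 j]) (low1 j)) 2)
        (pow_pos (lt_of_lt_of_le (by linarith [hm0 j]) (low2 j)) 2)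
    have hnsqv_up : Complex.normSq v ≤ 6561/4096 * m j ^ 4 := by
      rw [hnsqve]
      exact aux_prod_sq_le _ _ _ (norm_nonneg _) (norm_nonneg _)
        (up1 j) (up2 j) (hm0 j).le
    rw [hkey, hrev]
    rw [le_div_iff₀ hnsqv_pos]
    have hx0 : 0 ≤ 1 - Complex.normSq a := by linarith [(hna j).2]
    have hsx : s j * m j ^ 2 = 1 - Complex.normSq a := by
      show (1 - Complex.normSq (z j)) / m j ^ 2 * m j ^ 2 = 1 - Complex.normSq a
      exact div_mul_cancel₀ _ (pow_ne_zero 2 (hm0 j).ne')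
    have e4 : 3136/6561 * s j * (6561/4096 * m j ^ 4)
        = 49/64 * ((1 - Complex.normSq a) * m j ^ 2) := by
      rw [← hsx]; ring
    have h5 : 3136/6561 * s j * Complex.normSq v ≤ 3136/6561 * s j * (6561/4096 * m j ^ 4) :=
      mul_le_mul_of_nonneg_left hnsqv_up (by positivity)
    have h6 : (1 - Complex.normSq a) * (49/64 * m j ^ 2) ≤ (1 - Complex.normSq a) * v.re :=
      mul_le_mul_of_nonneg_left hvre_low hx0
    linarith [h5, h6, e4]
  have hsum : (3136/6561) * S ≤ ‖∑ j, (1 - (starRingEnd ℂ) (z j) * z j) /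
      ((z₀ - z j) * (1 - (starRingEnd ℂ) (z j) * z₀))‖ := by
    set T : ℂ := ∑ j, (1 - (starRingEnd ℂ) (z j) * z j) /
      ((z₀ - z j) * (1 - (starRingEnd ℂ) (z j) * z₀)) with hT
    have h1 : (ζ * T).re = ∑ j, (ζ * ((1 - (starRingEnd ℂ) (z j) * z j) /
        ((z₀ - z j) * (1 - (starRingEnd ℂ) (z j) * z₀)))).re := by
      rw [hT, Finset.mul_sum, Complex.re_sum]
    have h2 : 3136/6561 * S ≤ (ζ * T).re := by
      rw [h1, hS, Finset.mul_sum]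
      exact Finset.sum_le_sum fun j _ => hre j
    calc 3136/6561 * S ≤ (ζ * T).re := h2
      _ ≤ ‖ζ * T‖ := Complex.re_le_norm _
      _ = ‖T‖ := by rw [norm_mul, hζ, one_mul]
  -- assemble
  have hderiv : deriv B z₀ = B z₀ * ∑ j, (1 - (starRingEnd ℂ) (z j) * z j) /
      ((z₀ - z j) * (1 - (starRingEnd ℂ) (z j) * z₀)) :=
    aux_deriv_blaschke_prod n z c B hB z₀ hden0 hnum0
  have hX : (33/49) * ((3136/6561) * S) ≤ ‖deriv B z₀‖ := by
    rw [hderiv, norm_mul]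
    exact mul_le_mul hBz₀ hsum (by positivity) (norm_nonneg _)
  have hY : 7/4 * ε ≤ 1 - ‖z₀‖ ^ 2 := by
    rw [habsz₀, hr]
    exact aux_hY ε hε0 hε14
  have hXY : (33/49) * ((3136/6561) * S) * (7/4 * ε) ≤
      ‖deriv B z₀‖ * (1 - ‖z₀‖ ^ 2) := by
    apply mul_le_mul hX hY (by positivity)
    exact le_trans (by positivity) hX
  calc (0.07 : ℝ) * δ ≤ (33/49) * ((3136/6561) * S) * (7/4 * ε) := by
        have : (33/49) * ((3136/6561) * S) * (7/4*ε) = (33 * 3136 * 7 / (49 * 6561 * 4)) * (S * ε) := by ring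
        rw [this, hSε]
        linarith [hδ0]
    _ ≤ _ := hXY
end

section
/- With the notation and hypotheses of the previous segment estimate, |B'(z)| ≤ (1−d)^{-2}·|B'(ζ)| for all z ∈ [z₀, ζ], and consequently |B(z₀)| ≥ 1 − dδ/(1−d)². -/
open Complex Finset

private lemma normSq_identity (a w : ℂ) :
    Complex.normSq (1 - (starRingEnd ℂ) a * w) - Complex.normSq (w - a)
      = (1 - Complex.normSq a) * (1 - Complex.normSq w) := by
  have h : ∀ x : ℂ, ((Complex.normSq x : ℝ) : ℂ) = x * (starRingEnd ℂ) x :=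
    fun x => (Complex.mul_conj x).symm
  apply Complex.ofReal_injective
  push_cast
  rw [h, h, h, h]
  simp only [map_sub, map_mul, map_one, Complex.conj_conj]
  ring

private lemma abs_one_sub_conj_mul_pos {a w : ℂ} (ha : ‖a‖ < 1)
    (hw : ‖w‖ ≤ 1) : 0 < ‖1 - (starRingEnd ℂ) a * w‖ := by
  have h1 : ‖(starRingEnd ℂ) a * w‖ ≤ ‖a‖ := by
    rw [norm_mul, Complex.norm_conj]
    nlinarith [norm_nonneg a, norm_nonneg w]
  have h2 := norm_sub_norm_le (1 : ℂ) ((starRingEnd ℂ) a * w)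
  simp only [norm_one] at h2
  linarith

private lemma abs_blaschke_le_one {a w : ℂ} (ha : ‖a‖ < 1)
    (hw : ‖w‖ ≤ 1) :
    ‖(w - a) / (1 - (starRingEnd ℂ) a * w)‖ ≤ 1 := by
  have hd := abs_one_sub_conj_mul_pos ha hw
  rw [norm_div, div_le_one hd]
  have hns : Complex.normSq (w - a) ≤ Complex.normSq (1 - (starRingEnd ℂ) a * w) := by
    have h := normSq_identity a w
    have h1 : Complex.normSq a < 1 := by
      rw [Complex.normSq_eq_norm_sq]; nlinarith [norm_nonneg a]
    have h2 : Complex.normSq w ≤ 1 := by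
      rw [Complex.normSq_eq_norm_sq]; nlinarith [norm_nonneg w]
    nlinarith
  rw [Complex.normSq_eq_norm_sq, Complex.normSq_eq_norm_sq] at hns
  exact (pow_le_pow_iff_left₀ (norm_nonneg _) (norm_nonneg _) two_ne_zero).mp hns

private lemma blaschke_hasDerivAt (a : ℂ) {w : ℂ} (h : 1 - (starRingEnd ℂ) a * w ≠ 0) :
    HasDerivAt (fun x => (x - a) / (1 - (starRingEnd ℂ) a * x))
      ((1 - (Complex.normSq a : ℂ)) / (1 - (starRingEnd ℂ) a * w) ^ 2) w := by
  have h1 : HasDerivAt (fun x : ℂ => x - a) 1 w := (hasDerivAt_id w).sub_const a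
  have h2 : HasDerivAt (fun x : ℂ => 1 - (starRingEnd ℂ) a * x) (-(starRingEnd ℂ) a) w := by
    simpa using ((hasDerivAt_id w).const_mul ((starRingEnd ℂ) a)).const_sub 1
  have h3 := h1.div h2 h
  rw [show ((1 - (Complex.normSq a : ℂ)) / (1 - (starRingEnd ℂ) a * w) ^ 2) = ((1 * (1 - (starRingEnd ℂ) a * w) - (w - a) * -(starRingEnd ℂ) a) / (1 - (starRingEnd ℂ) a * w) ^ 2) by
    rw [show ((Complex.normSq a : ℝ) : ℂ) = a * (starRingEnd ℂ) a from (Complex.mul_conj a).symm]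
    ring]
  exact h3

set_option maxHeartbeats 1000000 in
/-- Along the segment `[z₀, ζ]` one has `|B'(z)| ≤ (1−d)⁻² |B'(ζ)|`, and
consequently `|B(z₀)| ≥ 1 − dδ/(1−d)²`. -/
theorem segment_deriv_bound (n : ℕ) (z : Fin n → ℂ)
    (hz : ∀ j, ‖z j‖ < 1)
    (c : ℂ) (hc : ‖c‖ = 1)
    (B : ℂ → ℂ)
    (hB : ∀ w : ℂ, B w = c * ∏ j, (w - z j) / (1 - (starRingEnd ℂ) (z j) * w))
    (ζ : ℂ) (hζ : ‖ζ‖ = 1)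
    (δ : ℝ) (hδ0 : 0 < δ) (hδ1 : δ ≤ 1)
    (hsep : ∀ j, δ / ‖deriv B ζ‖ ≤ ‖ζ - z j‖)
    (hM : 0 < ‖deriv B ζ‖)
    (d : ℝ) (hd0 : 0 < d) (hd1 : d < 1)
    (z₀ : ℂ)
    (hz₀ : z₀ = ((1 - d * δ / ‖deriv B ζ‖ : ℝ) : ℂ) * ζ) :
    (∀ w ∈ segment ℝ z₀ ζ,
      ‖deriv B w‖ ≤ ((1 - d) ^ 2)⁻¹ * ‖deriv B ζ‖) ∧
    1 - d * δ / (1 - d) ^ 2 ≤ ‖B z₀‖ := by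
  set M := ‖deriv B ζ‖ with hMdef
  set f : Fin n → ℂ → ℂ := fun j x => (x - z j) / (1 - (starRingEnd ℂ) (z j) * x) with hfdef
  have hζ0 : ζ ≠ 0 := by
    intro h; rw [h] at hζ; simp at hζ
  have hζc : ζ * (starRingEnd ℂ) ζ = 1 := by
    rw [Complex.mul_conj, Complex.normSq_eq_norm_sq, hζ]; norm_num
  have hne : ∀ j, ζ - z j ≠ 0 := by
    intro j h
    rw [sub_eq_zero] at h
    have h2 := hz j
    rw [← h, hζ] at h2
    exact lt_irrefl 1 h2
  have hkey : ∀ a : ℂ, 1 - (starRingEnd ℂ) a * ζ = ζ * (starRingEnd ℂ) (ζ - a) := by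
    intro a; rw [map_sub, mul_sub, hζc]; ring
  have hdenζ : ∀ j, 1 - (starRingEnd ℂ) (z j) * ζ ≠ 0 := by
    intro j
    rw [hkey]
    exact mul_ne_zero hζ0 ((map_ne_zero _).mpr (hne j))
  have hBf : B = fun x => c * ∏ j, f j x := funext hB
  have hfζ : ∀ j, ‖f j ζ‖ = 1 := by
    intro j
    rw [hfdef]
    simp only
    rw [norm_div, hkey, norm_mul, Complex.norm_conj, hζ, one_mul, div_self]
    exact norm_ne_zero_iff.mpr (hne j)
  have hBζ : ‖B ζ‖ = 1 := by
    rw [hB ζ, norm_mul, hc, one_mul, norm_prod]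
    calc (∏ j, ‖(ζ - z j) / (1 - (starRingEnd ℂ) (z j) * ζ)‖)
        = ∏ j : Fin n, 1 := Finset.prod_congr rfl fun j _ => hfζ j
      _ = 1 := Finset.prod_const_one
  have hD : ∀ x : ℂ, (∀ j, 1 - (starRingEnd ℂ) (z j) * x ≠ 0) →
      HasDerivAt B (c * ∑ i, (∏ j ∈ univ.erase i, f j x) *
        ((1 - (Complex.normSq (z i) : ℂ)) / (1 - (starRingEnd ℂ) (z i) * x) ^ 2)) x := by
    intro x hx
    rw [hBf]
    have h := HasDerivAt.finset_prod (u := univ) (f := f)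
      (f' := fun i => (1 - (Complex.normSq (z i) : ℂ)) / (1 - (starRingEnd ℂ) (z i) * x) ^ 2)
      (fun i _ => blaschke_hasDerivAt (z i) (hx i))
    simpa [smul_eq_mul] using h.const_mul c
  have hnslt : ∀ j, Complex.normSq (z j) < 1 := by
    intro j
    rw [Complex.normSq_eq_norm_sq]
    nlinarith [hz j, norm_nonneg (z j)]
  have hDζ := hD ζ hdenζ
  set S : ℝ := ∑ i, (1 - Complex.normSq (z i)) / Complex.normSq (ζ - z i) with hS
  have hterm : ∀ i : Fin n,
      ((∏ j ∈ univ.erase i, f j ζ) *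
        ((1 - (Complex.normSq (z i) : ℂ)) / (1 - (starRingEnd ℂ) (z i) * ζ) ^ 2)) * ζ
        = (∏ j, f j ζ) * (((1 - Complex.normSq (z i)) / Complex.normSq (ζ - z i) : ℝ) : ℂ) := by
    intro i
    have hprod : (∏ j, f j ζ) = f i ζ * ∏ j ∈ univ.erase i, f j ζ :=
      (Finset.mul_prod_erase univ _ (mem_univ i)).symm
    have e1 : f i ζ = (ζ - z i) / (ζ * (starRingEnd ℂ) (ζ - z i)) := by
      rw [hfdef]; simp only; rw [hkey]
    have h1 : (starRingEnd ℂ) (ζ - z i) ≠ 0 := (map_ne_zero _).mpr (hne i)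
    have hQ : (∏ x ∈ univ.erase i, (1 - (starRingEnd ℂ) (z x) * ζ)) ≠ 0 :=
      Finset.prod_ne_zero_iff.mpr fun j _ => hdenζ j
    have h1' : (starRingEnd ℂ) ζ - (starRingEnd ℂ) (z i) ≠ 0 := by
      rw [← map_sub]; exact h1
    have h2' := hne i
    rw [hprod, e1, hkey]
    push_cast
    rw [show ((Complex.normSq (ζ - z i) : ℝ) : ℂ) = (ζ - z i) * (starRingEnd ℂ) (ζ - z i) from
      (Complex.mul_conj _).symm]
    field_simp
  have hS0 : 0 ≤ S := by
    refine Finset.sum_nonneg fun i _ => div_nonneg ?_ (Complex.normSq_nonneg _)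
    linarith [hnslt i]
  have hMS : M = S := by
    have h1 : deriv B ζ * ζ = c * (∏ j, f j ζ) * (S : ℂ) := by
      rw [hDζ.deriv, mul_assoc, Finset.sum_mul]
      rw [Finset.sum_congr rfl fun i _ => hterm i, ← Finset.mul_sum, hS]
      push_cast
      ring
    have h2 := congrArg (‖·‖) h1
    rw [norm_mul, norm_mul, norm_mul, hζ, hc, mul_one, one_mul, norm_prod] at h2
    rw [show (∏ j, ‖f j ζ‖) = 1 from by
      rw [Finset.prod_congr rfl fun j _ => hfζ j]; exact Finset.prod_const_one,
      one_mul, Complex.norm_real, Real.norm_eq_abs] at h2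
    rw [hMdef, h2]
    exact _root_.abs_of_nonneg hS0
  set r := d * δ / M with hr
  have hr0 : 0 < r := div_pos (mul_pos hd0 hδ0) hM
  have hz₀' : z₀ = ((1 - r : ℝ) : ℂ) * ζ := hz₀
  have hn : 0 < n := by
    rcases Nat.eq_zero_or_pos n with h | h
    · exfalso
      subst h
      have hBc : B = fun _ => c := funext fun w => by rw [hB w]; simp
      have h0 : deriv B ζ = 0 := by rw [hBc]; simp
      rw [hMdef, h0] at hM
      simp at hM
    · exact h
  have hrd : ∀ j, r ≤ d * ‖ζ - z j‖ := by
    intro j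
    rw [hr, mul_div_assoc]
    exact mul_le_mul_of_nonneg_left (hsep j) hd0.le
  have hr2 : r < 2 := by
    have j₀ : Fin n := ⟨0, hn⟩
    have h1 := hrd j₀
    have h2 : ‖ζ - z j₀‖ ≤ ‖ζ‖ + ‖z j₀‖ :=
      norm_sub_le ζ (z j₀)
    rw [hζ] at h2
    nlinarith [hz j₀, norm_nonneg (ζ - z j₀)]
  have hz₀abs : ‖z₀‖ ≤ 1 := by
    rw [hz₀', norm_mul, Complex.norm_real, Real.norm_eq_abs, hζ, mul_one]
    rw [abs_le]
    constructor <;> linarith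
  have hseg : ∀ w ∈ segment ℝ z₀ ζ, ‖ζ - w‖ ≤ r ∧ ‖w‖ ≤ 1 := by
    rintro w ⟨a, b, ha, hb, hab, rfl⟩
    have habC : (a : ℂ) + (b : ℂ) = 1 := by exact_mod_cast congrArg Complex.ofReal hab
    constructor
    · have he : ζ - (a • z₀ + b • ζ) = (a : ℂ) * ((r : ℝ) : ℂ) * ζ := by
        rw [hz₀', Complex.real_smul, Complex.real_smul]
        push_cast
        linear_combination (-ζ) * habC
      rw [he, norm_mul, norm_mul, hζ, mul_one, Complex.norm_real, Real.norm_eq_abs, Complex.norm_real, Real.norm_eq_abs,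
        _root_.abs_of_nonneg ha, _root_.abs_of_nonneg hr0.le]
      nlinarith
    · calc ‖a • z₀ + b • ζ‖ ≤ ‖a • z₀‖ + ‖b • ζ‖ :=
            norm_add_le _ _
        _ = a * ‖z₀‖ + b * ‖ζ‖ := by
            rw [Complex.real_smul, Complex.real_smul, norm_mul, norm_mul,
              Complex.norm_real, Real.norm_eq_abs, Complex.norm_real, Real.norm_eq_abs, _root_.abs_of_nonneg ha,
              _root_.abs_of_nonneg hb]
        _ ≤ 1 := by rw [hζ]; nlinarith
  have hden : ∀ w ∈ segment ℝ z₀ ζ, ∀ j,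
      (1 - d) * ‖ζ - z j‖ ≤ ‖1 - (starRingEnd ℂ) (z j) * w‖ := by
    intro w hw j
    obtain ⟨hw1, hw2⟩ := hseg w hw
    have h2 : ‖1 - (starRingEnd ℂ) (z j) * ζ‖ = ‖ζ - z j‖ := by
      rw [hkey, norm_mul, Complex.norm_conj, hζ, one_mul]
    have h5 : ‖1 - (starRingEnd ℂ) (z j) * ζ‖ ≤
        ‖1 - (starRingEnd ℂ) (z j) * w‖ +
          ‖(starRingEnd ℂ) (z j) * (ζ - w)‖ := by
      rw [show (1 - (starRingEnd ℂ) (z j) * ζ) =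
        (1 - (starRingEnd ℂ) (z j) * w) - (starRingEnd ℂ) (z j) * (ζ - w) by ring]
      exact norm_sub_le _ _
    have h3 : ‖(starRingEnd ℂ) (z j) * (ζ - w)‖ ≤ r := by
      rw [norm_mul, Complex.norm_conj]
      calc ‖z j‖ * ‖ζ - w‖ ≤ 1 * r := by
            apply mul_le_mul (hz j).le hw1 (norm_nonneg _) zero_le_one
        _ = r := one_mul r
    have h4 := hrd j
    linarith [h2 ▸ h5]
  have hdne : ∀ w ∈ segment ℝ z₀ ζ, ∀ j, 1 - (starRingEnd ℂ) (z j) * w ≠ 0 := by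
    intro w hw j h
    have h1 := hden w hw j
    rw [h, norm_zero] at h1
    have h2 : 0 < ‖ζ - z j‖ := norm_pos_iff.mpr (hne j)
    nlinarith
  have hdpos : 0 < 1 - d := by linarith
  have part1 : ∀ w ∈ segment ℝ z₀ ζ,
      ‖deriv B w‖ ≤ ((1 - d) ^ 2)⁻¹ * M := by
    intro w hw
    obtain ⟨hw1, hw2⟩ := hseg w hw
    rw [(hD w (hdne w hw)).deriv, norm_mul, hc, one_mul]
    calc ‖∑ i, (∏ j ∈ univ.erase i, f j w) *
            ((1 - (Complex.normSq (z i) : ℂ)) / (1 - (starRingEnd ℂ) (z i) * w) ^ 2)‖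
        ≤ ∑ i, ‖(∏ j ∈ univ.erase i, f j w) *
            ((1 - (Complex.normSq (z i) : ℂ)) / (1 - (starRingEnd ℂ) (z i) * w) ^ 2)‖ :=
          norm_sum_le _ _
      _ ≤ ∑ i, ((1 - d) ^ 2)⁻¹ * ((1 - Complex.normSq (z i)) / Complex.normSq (ζ - z i)) := by
          refine Finset.sum_le_sum fun i _ => ?_
          rw [norm_mul, norm_div, norm_pow]
          have hP : ‖∏ j ∈ univ.erase i, f j w‖ ≤ 1 := by
            rw [norm_prod]
            exact Finset.prod_le_one (fun j _ => norm_nonneg _)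
              (fun j _ => abs_blaschke_le_one (hz j) hw2)
          have hnum : ‖1 - (Complex.normSq (z i) : ℂ)‖ = 1 - Complex.normSq (z i) := by
            rw [show (1 - (Complex.normSq (z i) : ℂ)) = ((1 - Complex.normSq (z i) : ℝ) : ℂ) by
              push_cast; ring, Complex.norm_real, Real.norm_eq_abs, _root_.abs_of_nonneg (by linarith [hnslt i])]
          have hd1' := hden w hw i
          have hpos1 : 0 < ‖ζ - z i‖ := norm_pos_iff.mpr (hne i)
          have hpos2 : 0 < ‖1 - (starRingEnd ℂ) (z i) * w‖ := by nlinarith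
          have hbound : ‖1 - (Complex.normSq (z i) : ℂ)‖ /
              ‖1 - (starRingEnd ℂ) (z i) * w‖ ^ 2
              ≤ ((1 - d) ^ 2)⁻¹ * ((1 - Complex.normSq (z i)) / Complex.normSq (ζ - z i)) := by
            have hns2 : Complex.normSq (ζ - z i) = ‖ζ - z i‖ ^ 2 :=
              Complex.normSq_eq_norm_sq _
            have hrhs : ((1 - d) ^ 2)⁻¹ * ((1 - Complex.normSq (z i)) / ‖ζ - z i‖ ^ 2)
                = (1 - Complex.normSq (z i)) / ((1 - d) ^ 2 * ‖ζ - z i‖ ^ 2) := by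
              rw [div_eq_mul_inv, div_eq_mul_inv, mul_inv]
              ring
            have hsq : ((1 - d) * ‖ζ - z i‖) ^ 2 ≤
                ‖1 - (starRingEnd ℂ) (z i) * w‖ ^ 2 :=
              pow_le_pow_left₀ (by positivity) hd1' 2
            rw [hnum, hns2, hrhs, div_le_div_iff₀ (by positivity) (by positivity)]
            nlinarith [hsq, hnslt i]
          calc ‖∏ j ∈ univ.erase i, f j w‖ *
                (‖1 - (Complex.normSq (z i) : ℂ)‖ /
                  ‖1 - (starRingEnd ℂ) (z i) * w‖ ^ 2)
              ≤ 1 * (((1 - d) ^ 2)⁻¹ * ((1 - Complex.normSq (z i)) / Complex.normSq (ζ - z i))) :=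
                mul_le_mul hP hbound (by positivity) zero_le_one
            _ = ((1 - d) ^ 2)⁻¹ * ((1 - Complex.normSq (z i)) / Complex.normSq (ζ - z i)) :=
                one_mul _
      _ = ((1 - d) ^ 2)⁻¹ * S := by rw [← Finset.mul_sum]
      _ = ((1 - d) ^ 2)⁻¹ * M := by rw [hMS]
  have hderW : ∀ w ∈ segment ℝ z₀ ζ, HasFDerivWithinAt B
      (ContinuousLinearMap.smulRight (1 : ℂ →L[ℂ] ℂ) (deriv B w)) (segment ℝ z₀ ζ) w := by
    intro w hw
    have h := hD w (hdne w hw)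
    rw [h.deriv]
    exact h.hasFDerivAt.hasFDerivWithinAt
  have hboundW : ∀ w ∈ segment ℝ z₀ ζ,
      ‖ContinuousLinearMap.smulRight (1 : ℂ →L[ℂ] ℂ) (deriv B w)‖ ≤ ((1 - d) ^ 2)⁻¹ * M := by
    intro w hw
    rw [ContinuousLinearMap.norm_smulRight_apply, ContinuousLinearMap.one_def,
      ContinuousLinearMap.norm_id, one_mul]
    exact part1 w hw
  have hmvt := Convex.norm_image_sub_le_of_norm_hasFDerivWithin_le hderW hboundW
    (convex_segment z₀ ζ) (left_mem_segment ℝ z₀ ζ) (right_mem_segment ℝ z₀ ζ)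
  have hζz₀ : ‖ζ - z₀‖ = r := by
    rw [hz₀', show ζ - ((1 - r : ℝ) : ℂ) * ζ = ((r : ℝ) : ℂ) * ζ by push_cast; ring,
      norm_mul, Complex.norm_real, Real.norm_eq_abs, hζ, mul_one, _root_.abs_of_nonneg hr0.le]
  rw [hζz₀] at hmvt
  have hCr : ((1 - d) ^ 2)⁻¹ * M * r = d * δ / (1 - d) ^ 2 := by
    rw [hr]
    field_simp
  have htri : ‖B ζ‖ - ‖B z₀‖ ≤ ‖B ζ - B z₀‖ := by
    have := norm_sub_norm_le (B ζ) (B z₀)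
    simpa using this
  exact ⟨part1, by linarith⟩
end

section
/- With the hypotheses of Theorem 4 and d ∈ (0,1) with 2d < (1−d)², one has |B'(z₀)/B(z₀)| ≥ (1 − 2d/(1−d)²)·|B'(ζ)|. -/
open Complex Finset

lemma factor_hasDerivAt (a w : ℂ) (h : (1 : ℂ) - (starRingEnd ℂ) a * w ≠ 0) :
    HasDerivAt (fun u => (u - a) / (1 - (starRingEnd ℂ) a * u))
      ((1 - (starRingEnd ℂ) a * a) / (1 - (starRingEnd ℂ) a * w) ^ 2) w := by
  have h1 : HasDerivAt (fun u : ℂ => u - a) 1 w := (hasDerivAt_id w).sub_const a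
  have h2 : HasDerivAt (fun u : ℂ => 1 - (starRingEnd ℂ) a * u) (-(starRingEnd ℂ) a) w := by
    simpa using HasDerivAt.const_sub 1 (HasDerivAt.const_mul ((starRingEnd ℂ) a) (hasDerivAt_id w))
  have h3 := h1.div h2 h
  refine h3.congr_deriv (Eq.symm ?_)
  field_simp
  ring

lemma blaschke_hasDerivAt_s13 (n : ℕ) (z : Fin n → ℂ) (c : ℂ) (w : ℂ)
    (h1 : ∀ j, w - z j ≠ 0) (h2 : ∀ j, (1:ℂ) - (starRingEnd ℂ) (z j) * w ≠ 0) :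
    HasDerivAt (fun u => c * ∏ j, (u - z j) / (1 - (starRingEnd ℂ) (z j) * u))
      ((c * ∏ j, (w - z j) / (1 - (starRingEnd ℂ) (z j) * w)) *
        ∑ j, (1 - (starRingEnd ℂ) (z j) * z j) /
          ((w - z j) * (1 - (starRingEnd ℂ) (z j) * w))) w := by
  have hf : ∀ j ∈ (univ : Finset (Fin n)), HasDerivAt
      (fun u => (u - z j) / (1 - (starRingEnd ℂ) (z j) * u))
      ((1 - (starRingEnd ℂ) (z j) * z j) / (1 - (starRingEnd ℂ) (z j) * w) ^ 2) w :=
    fun j _ => factor_hasDerivAt (z j) w (h2 j)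
  have hp := (HasDerivAt.finset_prod hf).const_mul c
  simp only [Finset.prod_apply] at hp
  refine hp.congr_deriv (Eq.symm ?_)
  rw [Finset.mul_sum, Finset.mul_sum]
  refine Finset.sum_congr rfl fun j _ => ?_
  rw [smul_eq_mul]
  have hprod : (∏ k ∈ univ.erase j, (w - z k) / (1 - (starRingEnd ℂ) (z k) * w)) *
      ((w - z j) / (1 - (starRingEnd ℂ) (z j) * w)) =
      ∏ k, (w - z k) / (1 - (starRingEnd ℂ) (z k) * w) :=
    Finset.prod_erase_mul univ _ (Finset.mem_univ j)
  rw [← hprod]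
  set E := ∏ k ∈ univ.erase j, (w - z k) / (1 - (starRingEnd ℂ) (z k) * w) with hE
  field_simp [h1 j, h2 j]

lemma term_bound (a P Q P₀ Q₀ : ℂ) (s t d : ℝ)
    (hs : 0 < s) (hd0 : 0 < d) (hd1 : d < 1)
    (hP₀ : ‖P₀‖ = s) (hQ₀ : ‖Q₀‖ = s)
    (hP : (1-d)*s ≤ ‖P‖) (hQ : (1-d)*s ≤ ‖Q‖)
    (hPd : ‖P₀ - P‖ ≤ t) (hQd : ‖Q₀ - Q‖ ≤ t)
    (ht0 : 0 ≤ t) (hts : t ≤ d * s) :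
    ‖a/(P*Q) - a/(P₀*Q₀)‖ ≤ 2*d/(1-d)^2 * (‖a‖ / s^2) := by
  have h1d : (0:ℝ) < 1 - d := by linarith
  have hPne : P ≠ 0 := norm_pos_iff.mp (lt_of_lt_of_le (by positivity) hP)
  have hQne : Q ≠ 0 := norm_pos_iff.mp (lt_of_lt_of_le (by positivity) hQ)
  have hP₀ne : P₀ ≠ 0 := norm_pos_iff.mp (hP₀ ▸ hs)
  have hQ₀ne : Q₀ ≠ 0 := norm_pos_iff.mp (hQ₀ ▸ hs)
  have key : a/(P*Q) - a/(P₀*Q₀) = a*(P₀ - P)/(P*P₀*Q) + a*(Q₀-Q)/(P₀*Q*Q₀) := by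
    field_simp
    ring
  have hA : (0:ℝ) ≤ ‖a‖ := norm_nonneg a
  calc ‖a/(P*Q) - a/(P₀*Q₀)‖
      ≤ ‖a*(P₀ - P)/(P*P₀*Q)‖ + ‖a*(Q₀-Q)/(P₀*Q*Q₀)‖ := by
        rw [key]; exact norm_add_le _ _
    _ = ‖a‖ * ‖P₀-P‖ / (‖P‖ * ‖P₀‖ * ‖Q‖)
        + ‖a‖ * ‖Q₀-Q‖ / (‖P₀‖ * ‖Q‖ * ‖Q₀‖) := by
        simp [map_mul, map_div₀]
    _ ≤ ‖a‖ * (d*s) / ((1-d)^2 * s^3) + ‖a‖ * (d*s) / ((1-d)^2 * s^3) := by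
        have b1 : ‖a‖ * ‖P₀-P‖ / (‖P‖ * ‖P₀‖ * ‖Q‖)
            ≤ ‖a‖ * (d*s) / ((1-d)^2 * s^3) := by
          apply div_le_div₀ (by positivity)
            (mul_le_mul_of_nonneg_left (hPd.trans hts) hA) (by positivity)
          nlinarith [mul_le_mul hP hQ (by positivity) (norm_nonneg P)]
        have b2 : ‖a‖ * ‖Q₀-Q‖ / (‖P₀‖ * ‖Q‖ * ‖Q₀‖)
            ≤ ‖a‖ * (d*s) / ((1-d)^2 * s^3) := by
          apply div_le_div₀ (by positivity)
            (mul_le_mul_of_nonneg_left (hQd.trans hts) hA) (by positivity)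
          rw [hP₀, hQ₀]
          have e1 : (1-d)*(s^3) ≤ s * ‖Q‖ * s := by
            nlinarith [mul_le_mul_of_nonneg_right hQ (mul_pos hs hs).le]
          have e2 : (1-d)^2*s^3 ≤ (1-d)*s^3 := by nlinarith [mul_pos (mul_pos hd0 h1d) (pow_pos hs 3)]
          linarith
        linarith
    _ = 2*d/(1-d)^2 * (‖a‖ / s^2) := by
        field_simp
        ring


/-- Lower bound for the logarithmic derivative at `z₀`:
`|B'(z₀)/B(z₀)| ≥ (1 − 2d/(1−d)²)|B'(ζ)|`. -/
theorem log_deriv_lower_bound (n : ℕ) (z : Fin n → ℂ)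
    (hz : ∀ j, ‖z j‖ < 1)
    (c : ℂ) (hc : ‖c‖ = 1)
    (B : ℂ → ℂ)
    (hB : ∀ w : ℂ, B w = c * ∏ j, (w - z j) / (1 - (starRingEnd ℂ) (z j) * w))
    (ζ : ℂ) (hζ : ‖ζ‖ = 1)
    (δ : ℝ) (hδ0 : 0 < δ) (hδ1 : δ ≤ 1)
    (hsep : ∀ j, δ / ‖deriv B ζ‖ ≤ ‖ζ - z j‖)
    (hM : 0 < ‖deriv B ζ‖)
    (d : ℝ) (hd0 : 0 < d) (hd1 : d < 1) (h2d : 2 * d < (1 - d) ^ 2)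
    (z₀ : ℂ)
    (hz₀ : z₀ = ((1 - d * δ / ‖deriv B ζ‖ : ℝ) : ℂ) * ζ) :
    (1 - 2 * d / (1 - d) ^ 2) * ‖deriv B ζ‖ ≤
      ‖deriv B z₀ / B z₀‖ := by
  classical
  have hBfun : B = fun u => c * ∏ j, (u - z j) / (1 - (starRingEnd ℂ) (z j) * u) :=
    funext hB
  set M := ‖deriv B ζ‖ with hMdef
  have h1d : (0:ℝ) < 1 - d := by linarith
  have hδM : 0 < δ / M := div_pos hδ0 hM
  have hsj : ∀ j, 0 < ‖ζ - z j‖ := fun j => lt_of_lt_of_le hδM (hsep j)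
  -- t = |ζ - z₀|
  set t := d * δ / M with htdef
  have ht0 : 0 ≤ t := by positivity
  have hζz₀ : ζ - z₀ = (t : ℂ) * ζ := by rw [hz₀]; push_cast; ring
  have habst : ‖ζ - z₀‖ = t := by
    rw [hζz₀, norm_mul, Complex.norm_real, Real.norm_eq_abs, hζ, mul_one, _root_.abs_of_nonneg ht0]
  have hts : ∀ j, t ≤ d * ‖ζ - z j‖ := by
    intro j
    have : t = d * (δ / M) := by rw [htdef]; ring
    rw [this]
    exact mul_le_mul_of_nonneg_left (hsep j) hd0.le
  -- |1 - conj z_j * ζ| = |ζ - z_j|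
  have hζ1 : ζ * (starRingEnd ℂ) ζ = 1 := by
    rw [Complex.mul_conj, Complex.normSq_eq_norm_sq, hζ]; norm_num
  have hkey : ∀ j, (1:ℂ) - (starRingEnd ℂ) (z j) * ζ = ζ * (starRingEnd ℂ) (ζ - z j) := by
    intro j
    rw [map_sub]
    linear_combination -hζ1
  have habsQζ : ∀ j, ‖1 - (starRingEnd ℂ) (z j) * ζ‖ = ‖ζ - z j‖ := by
    intro j
    rw [hkey j, norm_mul, Complex.norm_conj, hζ, one_mul]
  -- segment estimates
  have hP : ∀ j, (1-d) * ‖ζ - z j‖ ≤ ‖z₀ - z j‖ := by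
    intro j
    have htr := norm_sub_le_norm_sub_add_norm_sub ζ z₀ (z j)
    rw [habst] at htr
    have := hts j
    linarith
  have hQ : ∀ j, (1-d) * ‖ζ - z j‖ ≤ ‖1 - (starRingEnd ℂ) (z j) * z₀‖ := by
    intro j
    have hid : (1:ℂ) - (starRingEnd ℂ) (z j) * ζ =
        ((1:ℂ) - (starRingEnd ℂ) (z j) * z₀) - (starRingEnd ℂ) (z j) * (ζ - z₀) := by ring
    have htr : ‖1 - (starRingEnd ℂ) (z j) * ζ‖
        ≤ ‖1 - (starRingEnd ℂ) (z j) * z₀‖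
          + ‖(starRingEnd ℂ) (z j) * (ζ - z₀)‖ := by
      rw [hid]
      exact norm_sub_le _ _
    have hzt : ‖(starRingEnd ℂ) (z j) * (ζ - z₀)‖ ≤ t := by
      rw [norm_mul, Complex.norm_conj, habst]
      calc ‖z j‖ * t ≤ 1 * t := by
            exact mul_le_mul_of_nonneg_right (hz j).le ht0
        _ = t := one_mul t
    have := hts j
    rw [habsQζ j] at htr
    linarith
  -- nonvanishing
  have hPζne : ∀ j, ζ - z j ≠ 0 := fun j => norm_pos_iff.mp (hsj j)
  have hQζne : ∀ j, (1:ℂ) - (starRingEnd ℂ) (z j) * ζ ≠ 0 := fun j =>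
    norm_pos_iff.mp (by rw [habsQζ j]; exact hsj j)
  have hPz₀ne : ∀ j, z₀ - z j ≠ 0 := fun j =>
    norm_pos_iff.mp (lt_of_lt_of_le (mul_pos h1d (hsj j)) (hP j))
  have hQz₀ne : ∀ j, (1:ℂ) - (starRingEnd ℂ) (z j) * z₀ ≠ 0 := fun j =>
    norm_pos_iff.mp (lt_of_lt_of_le (mul_pos h1d (hsj j)) (hQ j))
  -- derivative formulas
  have hdζ : deriv B ζ = (c * ∏ j, (ζ - z j) / (1 - (starRingEnd ℂ) (z j) * ζ)) *
      ∑ j, (1 - (starRingEnd ℂ) (z j) * z j) /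
        ((ζ - z j) * (1 - (starRingEnd ℂ) (z j) * ζ)) := by
    rw [hBfun]
    exact (blaschke_hasDerivAt_s13 n z c ζ hPζne hQζne).deriv
  have hdz₀ : deriv B z₀ = (c * ∏ j, (z₀ - z j) / (1 - (starRingEnd ℂ) (z j) * z₀)) *
      ∑ j, (1 - (starRingEnd ℂ) (z j) * z j) /
        ((z₀ - z j) * (1 - (starRingEnd ℂ) (z j) * z₀)) := by
    rw [hBfun]
    exact (blaschke_hasDerivAt_s13 n z c z₀ hPz₀ne hQz₀ne).deriv
  have hcne : c ≠ 0 := norm_pos_iff.mp (by rw [hc]; norm_num)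
  have hBz₀ne : c * ∏ j, (z₀ - z j) / (1 - (starRingEnd ℂ) (z j) * z₀) ≠ 0 :=
    mul_ne_zero hcne (Finset.prod_ne_zero_iff.mpr fun j _ =>
      div_ne_zero (hPz₀ne j) (hQz₀ne j))
  have hlogz₀ : deriv B z₀ / B z₀ =
      ∑ j, (1 - (starRingEnd ℂ) (z j) * z j) /
        ((z₀ - z j) * (1 - (starRingEnd ℂ) (z j) * z₀)) := by
    rw [hdz₀, hB z₀]
    exact mul_div_cancel_left₀ _ hBz₀ne
  -- |B ζ| = 1
  have habsBζ : ‖c * ∏ j, (ζ - z j) / (1 - (starRingEnd ℂ) (z j) * ζ)‖ = 1 := by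
    rw [norm_mul, hc, one_mul, norm_prod]
    refine Finset.prod_eq_one fun j _ => ?_
    rw [norm_div, habsQζ j, div_self (ne_of_gt (hsj j))]
  -- value of S at ζ
  set R := ∑ j, (1 - ‖z j‖^2) / ‖ζ - z j‖^2 with hRdef
  have hnum : ∀ j, (1:ℂ) - (starRingEnd ℂ) (z j) * z j = ((1 - ‖z j‖^2 : ℝ) : ℂ) := by
    intro j
    rw [mul_comm, Complex.mul_conj, Complex.normSq_eq_norm_sq]
    push_cast
    ring
  have hden : ∀ j, (ζ - z j) * (1 - (starRingEnd ℂ) (z j) * ζ) =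
      ζ * ((‖ζ - z j‖^2 : ℝ) : ℂ) := by
    intro j
    rw [hkey j]
    rw [show (ζ - z j) * (ζ * (starRingEnd ℂ) (ζ - z j)) = ζ * ((ζ - z j) * (starRingEnd ℂ) (ζ - z j)) from by ring,
      Complex.mul_conj, Complex.normSq_eq_norm_sq]
  have hζne : ζ ≠ 0 := norm_pos_iff.mp (by rw [hζ]; norm_num)
  have hSζ : (∑ j, (1 - (starRingEnd ℂ) (z j) * z j) /
      ((ζ - z j) * (1 - (starRingEnd ℂ) (z j) * ζ))) = (starRingEnd ℂ) ζ * ((R : ℝ) : ℂ) := by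
    rw [hRdef]
    push_cast
    rw [Finset.mul_sum]
    refine Finset.sum_congr rfl fun j _ => ?_
    rw [hnum j, hden j]
    have hsne : ((‖ζ - z j‖ : ℝ) : ℂ)^2 ≠ 0 := by
      exact_mod_cast (pow_pos (hsj j) 2).ne'
    push_cast
    rw [mul_div_assoc']
    rw [div_eq_div_iff (mul_ne_zero hζne hsne) hsne]
    linear_combination (-(1 - ((‖z j‖ : ℂ))^2) * ((‖ζ - z j‖ : ℂ))^2) * hζ1
  have hR0 : 0 ≤ R := Finset.sum_nonneg fun j _ =>
    div_nonneg (by nlinarith [norm_nonneg (z j), hz j]) (sq_nonneg _)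
  have hMR : M = R := by
    rw [hMdef, hdζ, norm_mul, habsBζ, one_mul, hSζ, norm_mul, Complex.norm_conj, hζ, one_mul,
      Complex.norm_real, Real.norm_eq_abs, _root_.abs_of_nonneg hR0]
  -- difference bound
  have hdiffsum : ‖(∑ j, (1 - (starRingEnd ℂ) (z j) * z j) /
        ((z₀ - z j) * (1 - (starRingEnd ℂ) (z j) * z₀)))
      - ∑ j, (1 - (starRingEnd ℂ) (z j) * z j) /
        ((ζ - z j) * (1 - (starRingEnd ℂ) (z j) * ζ))‖ ≤ 2*d/(1-d)^2 * R := by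
    rw [← Finset.sum_sub_distrib]
    calc ‖∑ j, ((1 - (starRingEnd ℂ) (z j) * z j) /
            ((z₀ - z j) * (1 - (starRingEnd ℂ) (z j) * z₀))
          - (1 - (starRingEnd ℂ) (z j) * z j) /
            ((ζ - z j) * (1 - (starRingEnd ℂ) (z j) * ζ)))‖
        ≤ ∑ j, ‖(1 - (starRingEnd ℂ) (z j) * z j) /
            ((z₀ - z j) * (1 - (starRingEnd ℂ) (z j) * z₀))
          - (1 - (starRingEnd ℂ) (z j) * z j) /
            ((ζ - z j) * (1 - (starRingEnd ℂ) (z j) * ζ))‖ :=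
          norm_sum_le _ _
      _ ≤ ∑ j, 2*d/(1-d)^2 * ((1 - ‖z j‖^2) / ‖ζ - z j‖^2) := by
          refine Finset.sum_le_sum fun j _ => ?_
          have hb := term_bound (1 - (starRingEnd ℂ) (z j) * z j)
            (z₀ - z j) (1 - (starRingEnd ℂ) (z j) * z₀)
            (ζ - z j) (1 - (starRingEnd ℂ) (z j) * ζ)
            (‖ζ - z j‖) t d (hsj j) hd0 hd1 rfl (habsQζ j)
            (hP j) (hQ j) ?_ ?_ ht0 (hts j)
          · have habsnum : ‖1 - (starRingEnd ℂ) (z j) * z j‖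
                = 1 - ‖z j‖^2 := by
              rw [hnum j, Complex.norm_real, Real.norm_eq_abs, _root_.abs_of_nonneg (by nlinarith [norm_nonneg (z j), hz j])]
            rw [habsnum] at hb
            exact hb
          · rw [show (ζ - z j) - (z₀ - z j) = ζ - z₀ from by ring, habst]
          · rw [show ((1:ℂ) - (starRingEnd ℂ) (z j) * ζ) - (1 - (starRingEnd ℂ) (z j) * z₀)
              = (starRingEnd ℂ) (z j) * -(ζ - z₀) from by ring]
            rw [show (starRingEnd ℂ) (z j) * -(ζ - z₀) = -((starRingEnd ℂ) (z j) * (ζ - z₀)) from by ring,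
              norm_neg, norm_mul, Complex.norm_conj, habst]
            calc ‖z j‖ * t ≤ 1 * t := mul_le_mul_of_nonneg_right (hz j).le ht0
              _ = t := one_mul t
      _ = 2*d/(1-d)^2 * R := by rw [hRdef, ← Finset.mul_sum]
  -- conclusion
  have habsSc : ‖∑ j, (1 - (starRingEnd ℂ) (z j) * z j) /
      ((ζ - z j) * (1 - (starRingEnd ℂ) (z j) * ζ))‖ = R := by
    rw [hSζ, norm_mul, Complex.norm_conj, hζ, one_mul, Complex.norm_real, Real.norm_eq_abs, _root_.abs_of_nonneg hR0]
  rw [hlogz₀, hMR]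
  set Sz := ∑ j, (1 - (starRingEnd ℂ) (z j) * z j) /
      ((z₀ - z j) * (1 - (starRingEnd ℂ) (z j) * z₀)) with hSzdef
  set Sc := ∑ j, (1 - (starRingEnd ℂ) (z j) * z j) /
      ((ζ - z j) * (1 - (starRingEnd ℂ) (z j) * ζ)) with hScdef
  have tri : ‖Sc‖ ≤ ‖Sz‖ + ‖Sz - Sc‖ := by
    calc ‖Sc‖ = ‖Sz + (Sc - Sz)‖ := by rw [add_sub_cancel]
      _ ≤ ‖Sz‖ + ‖Sc - Sz‖ := norm_add_le _ _
      _ = ‖Sz‖ + ‖Sz - Sc‖ := by rw [norm_sub_rev]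
  have hq : (1 - 2*d/(1-d)^2) * R = R - 2*d/(1-d)^2 * R := by ring
  have goal1 : (1 - 2*d/(1-d)^2) * R ≤ ‖Sz‖ := by
    rw [hq]
    linarith [hdiffsum, tri, habsSc]
  calc (1 - 2 * d / (1 - d) ^ 2) * R = (1 - 2*d/(1-d)^2) * R := by ring
    _ ≤ ‖Sz‖ := goal1
end

section
/- If ζ ∈ ∂𝔻 is a point where |B'| attains its maximum over the closed unit disk for a finite Blaschke product B with zeros z_j, then |B'(ζ)|·dist(ζ, {z_j}) ≥ 1. -/
open Complex Finset

namespace MaxPointAux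

lemma num_ne {z w : ℂ} (hz : ‖z‖ < 1) (hw : ‖w‖ = 1) :
    w - z ≠ 0 := by
  intro h
  rw [sub_eq_zero] at h
  rw [h] at hw
  exact absurd hw (ne_of_lt hz)

lemma den_ne {z w : ℂ} (hz : ‖z‖ < 1) (hw : ‖w‖ = 1) :
    1 - (starRingEnd ℂ) z * w ≠ 0 := by
  intro h
  rw [sub_eq_zero] at h
  have := congrArg (‖·‖) h
  rw [norm_one, norm_mul, Complex.norm_conj, hw, mul_one] at this
  exact absurd this.symm (ne_of_lt hz)

lemma hww {w : ℂ} (hw : ‖w‖ = 1) : w * (starRingEnd ℂ) w = 1 := by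
  rw [Complex.mul_conj, Complex.normSq_eq_norm_sq, hw]; norm_num

lemma den_eq {z w : ℂ} (hw : ‖w‖ = 1) :
    1 - (starRingEnd ℂ) z * w = w * (starRingEnd ℂ) (w - z) := by
  have h := hww hw
  rw [map_sub]
  linear_combination -h

lemma abs_factor {z w : ℂ} (hz : ‖z‖ < 1) (hw : ‖w‖ = 1) :
    ‖(w - z) / (1 - (starRingEnd ℂ) z * w)‖ = 1 := by
  rw [norm_div, den_eq hw, norm_mul, hw, one_mul, Complex.norm_conj,
    div_self (norm_ne_zero_iff.mpr (num_ne hz hw))]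

lemma conj_factor {z w : ℂ} (hz : ‖z‖ < 1) (hw : ‖w‖ = 1) :
    (starRingEnd ℂ) ((w - z) / (1 - (starRingEnd ℂ) z * w)) =
      (1 - (starRingEnd ℂ) z * w) / (w - z) := by
  have habs := abs_factor hz hw
  have hf0 : (w - z) / (1 - (starRingEnd ℂ) z * w) ≠ 0 :=
    div_ne_zero (num_ne hz hw) (den_ne hz hw)
  have hmc : (w - z) / (1 - (starRingEnd ℂ) z * w) *
      (starRingEnd ℂ) ((w - z) / (1 - (starRingEnd ℂ) z * w)) = 1 := by
    rw [Complex.mul_conj, Complex.normSq_eq_norm_sq, habs]; norm_num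
  rw [← inv_eq_of_mul_eq_one_right hmc, inv_div]

lemma factor_hasDerivAt {z w : ℂ} (hz : ‖z‖ < 1) (hw : ‖w‖ = 1) :
    HasDerivAt (fun x => (x - z) / (1 - (starRingEnd ℂ) z * x))
      ((1 - (starRingEnd ℂ) z * z) / (1 - (starRingEnd ℂ) z * w) ^ 2) w := by
  have h2 := den_ne hz hw
  have hnum : HasDerivAt (fun x : ℂ => x - z) 1 w := (hasDerivAt_id w).sub_const z
  have hden : HasDerivAt (fun x : ℂ => 1 - (starRingEnd ℂ) z * x) (-(starRingEnd ℂ) z) w := by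
    simpa using (((hasDerivAt_id w).const_mul ((starRingEnd ℂ) z)).const_sub 1)
  have := hnum.fun_div hden h2
  exact this.congr_deriv (by ring)

/-- On the unit circle, `|B'(w)|` dominates each term `(1-|z_j|²)/|w-z_j|²`. -/
lemma key (n : ℕ) (z : Fin n → ℂ) (hz : ∀ j, ‖z j‖ < 1)
    (w : ℂ) (hw : ‖w‖ = 1) (j : Fin n) :
    (1 - ‖z j‖ ^ 2) / ‖w - z j‖ ^ 2 ≤
      ‖deriv (fun x => ∏ k, (x - z k) / (1 - (starRingEnd ℂ) (z k) * x)) w‖ := by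
  classical
  set f : Fin n → ℂ → ℂ := fun k x => (x - z k) / (1 - (starRingEnd ℂ) (z k) * x) with hf
  set f' : Fin n → ℂ := fun k => (1 - (starRingEnd ℂ) (z k) * z k) / (1 - (starRingEnd ℂ) (z k) * w) ^ 2 with hf'
  have hD : HasDerivAt (fun x => ∏ k, f k x)
      (∑ k, (∏ l ∈ univ.erase k, f l w) • f' k) w :=
    HasDerivAt.fun_finsetProd (fun k _ => factor_hasDerivAt (hz k) hw)
  set D : ℂ := ∑ k, (∏ l ∈ univ.erase k, f l w) • f' k with hDdef
  have hderiv : deriv (fun x => ∏ k, f k x) w = D := hD.deriv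
  set G : ℂ := ∏ k, f k w with hG
  have habsf : ∀ k : Fin n, ‖f k w‖ = 1 := fun k => abs_factor (hz k) hw
  have habsG : ‖G‖ = 1 := by
    rw [hG, norm_prod]
    exact Finset.prod_eq_one (fun k _ => habsf k)
  -- key identity: conj G * (w * D) is the sum of positive real terms
  have hterm : ∀ k : Fin n,
      (starRingEnd ℂ) G * (w * ((∏ l ∈ univ.erase k, f l w) • f' k)) =
        (((1 - ‖z k‖ ^ 2) / ‖w - z k‖ ^ 2 : ℝ) : ℂ) := by
    intro k
    have hGsplit : G = f k w * ∏ l ∈ univ.erase k, f l w :=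
      (Finset.mul_prod_erase univ (fun l => f l w) (mem_univ k)).symm
    have hstep : (starRingEnd ℂ) G * (∏ l ∈ univ.erase k, f l w) =
        (starRingEnd ℂ) (f k w) * ∏ l ∈ univ.erase k, ((starRingEnd ℂ) (f l w) * f l w) := by
      rw [hGsplit, map_mul, map_prod, Finset.prod_mul_distrib]
      ring
    have hones : ∀ l ∈ univ.erase k, (starRingEnd ℂ) (f l w) * f l w = 1 := by
      intro l _
      rw [mul_comm, Complex.mul_conj, Complex.normSq_eq_norm_sq, habsf l]
      norm_num
    have hconjG : (starRingEnd ℂ) G * (∏ l ∈ univ.erase k, f l w) = (starRingEnd ℂ) (f k w) := by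
      rw [hstep, Finset.prod_congr rfl hones, Finset.prod_const_one, mul_one]
    have hck : (starRingEnd ℂ) (f k w) = (1 - (starRingEnd ℂ) (z k) * w) / (w - z k) :=
      conj_factor (hz k) hw
    have h1 := num_ne (hz k) hw
    have h2 := den_ne (hz k) hw
    have hde := den_eq (z := z k) hw
    have hc2 : (starRingEnd ℂ) (w - z k) ≠ 0 := by
      intro hc; apply h1; have := congrArg (starRingEnd ℂ) hc; simpa using this
    have habs2 : ((‖w - z k‖ : ℂ)) ^ 2 = (w - z k) * (starRingEnd ℂ) (w - z k) := by
      rw [← Complex.ofReal_pow, ← Complex.normSq_eq_norm_sq, ← Complex.mul_conj]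
    have habsz2 : ((‖z k‖ : ℂ)) ^ 2 = z k * (starRingEnd ℂ) (z k) := by
      rw [← Complex.ofReal_pow, ← Complex.normSq_eq_norm_sq, ← Complex.mul_conj]
    calc (starRingEnd ℂ) G * (w * ((∏ l ∈ univ.erase k, f l w) • f' k))
        = ((starRingEnd ℂ) G * (∏ l ∈ univ.erase k, f l w)) * (w * f' k) := by
          simp only [smul_eq_mul]; ring
      _ = ((1 - (starRingEnd ℂ) (z k) * w) / (w - z k)) * (w * f' k) := by
          rw [hconjG, hck]
      _ = (((1 - ‖z k‖ ^ 2) / ‖w - z k‖ ^ 2 : ℝ) : ℂ) := by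
          have hw0 : w ≠ 0 := by
            intro hc; rw [hc] at hw; simp at hw
          simp only [hf']
          rw [Complex.ofReal_div, Complex.ofReal_sub, Complex.ofReal_one,
            Complex.ofReal_pow, Complex.ofReal_pow, habs2, habsz2, hde]
          have hgen : ∀ u : ℂ, u ≠ 0 →
              w * u / (w - z k) * (w * ((1 - (starRingEnd ℂ) (z k) * z k) / (w * u) ^ 2)) =
                (1 - z k * (starRingEnd ℂ) (z k)) / ((w - z k) * u) := by
            intro u hu
            have hw0' : w ≠ 0 := hw0
            field_simp
          exact hgen _ hc2
  have hsum : (starRingEnd ℂ) G * (w * D) =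
      ((∑ k, (1 - ‖z k‖ ^ 2) / ‖w - z k‖ ^ 2 : ℝ) : ℂ) := by
    rw [hDdef, Finset.mul_sum, Finset.mul_sum, Complex.ofReal_sum]
    exact Finset.sum_congr rfl (fun k _ => hterm k)
  -- conclude
  have hnonneg : ∀ k : Fin n, 0 ≤ (1 - ‖z k‖ ^ 2) / ‖w - z k‖ ^ 2 := by
    intro k
    apply div_nonneg
    · nlinarith [hz k, norm_nonneg (z k)]
    · positivity
  have habsD : ‖D‖ = ∑ k, (1 - ‖z k‖ ^ 2) / ‖w - z k‖ ^ 2 := by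
    have hh : ‖(starRingEnd ℂ) G * (w * D)‖ = ‖D‖ := by
      rw [norm_mul, norm_mul, Complex.norm_conj, habsG, hw, one_mul, one_mul]
    rw [← hh, hsum, Complex.norm_real, Real.norm_eq_abs,
      _root_.abs_of_nonneg (Finset.sum_nonneg fun k _ => hnonneg k)]
  rw [hderiv, habsD]
  exact Finset.single_le_sum (fun k _ => hnonneg k) (mem_univ j)

end MaxPointAux

/-- If `ζ` is a boundary point where `|B'|` attains its maximum on the closed
unit disk, then `|B'(ζ)| · dist(ζ, {z_j}) ≥ 1`. -/
theorem max_point_condition (n : ℕ) (hn : 0 < n) (z : Fin n → ℂ)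
    (hz : ∀ j, ‖z j‖ < 1)
    (B : ℂ → ℂ)
    (hB : ∀ w : ℂ, B w = ∏ j, (w - z j) / (1 - (starRingEnd ℂ) (z j) * w))
    (ζ : ℂ) (hζ : ‖ζ‖ = 1)
    (hmax : ∀ w : ℂ, ‖w‖ ≤ 1 → ‖deriv B w‖ ≤ ‖deriv B ζ‖) :
    1 ≤ ‖deriv B ζ‖ * ⨅ j, ‖ζ - z j‖ := by
  classical
  have hBg : B = fun x => ∏ k, (x - z k) / (1 - (starRingEnd ℂ) (z k) * x) := funext hB
  haveI : Nonempty (Fin n) := Fin.pos_iff_nonempty.mp hn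
  -- the infimum is attained at some j₀
  obtain ⟨j₀, -, hj₀⟩ := Finset.exists_min_image Finset.univ (fun j => ‖ζ - z j‖)
    ⟨Classical.arbitrary (Fin n), Finset.mem_univ _⟩
  have hinf : (⨅ j, ‖ζ - z j‖) = ‖ζ - z j₀‖ :=
    le_antisymm (ciInf_le (Set.Finite.bddBelow (Set.finite_range _)) j₀)
      (le_ciInf fun i => hj₀ i (Finset.mem_univ i))
  set a : ℝ := ‖z j₀‖ with ha
  have ha0 : 0 ≤ a := norm_nonneg _
  have ha1 : a < 1 := hz j₀
  -- choose the boundary point closest to z j₀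
  set wj : ℂ := if h : z j₀ = 0 then 1 else z j₀ / (a : ℂ) with hwj
  have hane : z j₀ ≠ 0 → (a : ℂ) ≠ 0 := by
    intro h
    simp only [ne_eq, Complex.ofReal_eq_zero]
    simpa [ha] using (norm_ne_zero_iff.mpr h)
  have hwj1 : ‖wj‖ = 1 := by
    rw [hwj]
    split_ifs with h
    · simp
    · rw [norm_div, Complex.norm_real, Real.norm_eq_abs, _root_.abs_of_nonneg ha0, ← ha,
        div_self (by simpa [ha] using (norm_ne_zero_iff.mpr h))]
  have hwjd : ‖wj - z j₀‖ = 1 - a := by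
    rw [hwj]
    split_ifs with h
    · simp [h, ha]
    · have hsplit : z j₀ / (a : ℂ) - z j₀ = z j₀ * ((1 - (a : ℂ)) / (a : ℂ)) := by
        field_simp [hane h]
      rw [hsplit, norm_mul, norm_div, ← Complex.ofReal_one, ← Complex.ofReal_sub,
        Complex.norm_real, Real.norm_eq_abs, Complex.norm_real, Real.norm_eq_abs,
        _root_.abs_of_nonneg (by linarith : (0:ℝ) ≤ 1 - a), _root_.abs_of_nonneg ha0, ← ha]
      have haR : a ≠ 0 := by simpa [ha] using (norm_ne_zero_iff.mpr h)
      field_simp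
  -- lower bound for |B'(wj)|
  have hkey := MaxPointAux.key n z hz wj hwj1 j₀
  rw [← hBg] at hkey
  rw [hwjd] at hkey
  have h1a : (0:ℝ) < 1 - a := by linarith
  have hkey2 : (1 + a) / (1 - a) ≤ ‖deriv B wj‖ := by
    have hq : (1 - a ^ 2) / (1 - a) ^ 2 = (1 + a) / (1 - a) := by
      rw [div_eq_div_iff (by positivity) h1a.ne']
      ring
    rwa [← ha, hq] at hkey
  have hmw := hmax wj (le_of_eq hwj1)
  have hDζ : (1 + a) / (1 - a) ≤ ‖deriv B ζ‖ := le_trans hkey2 hmw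
  -- |ζ - z j₀| ≥ 1 - a
  have hdist : 1 - a ≤ ‖ζ - z j₀‖ := by
    have := norm_add_le (ζ - z j₀) (z j₀)
    simp only [sub_add_cancel] at this
    rw [hζ] at this
    linarith
  rw [hinf]
  have h1 : 1 + a ≤ ‖deriv B ζ‖ * (1 - a) := (div_le_iff₀ h1a).mp hDζ
  have hD0 : 0 ≤ ‖deriv B ζ‖ := norm_nonneg _
  nlinarith
end
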